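/- arXiv:2010.05748 — 2 statements merged into one kernel-verified Lean document; each statement's English description precedes it below -/
import Mathlib

section
/- Let p be a prime number and let K be an algebraically closed field equipped with a nonarchimedean rank-one valuation v : K → ℝ≥0 whose residue field has characteristic p (i.e. v(p) < 1), and let R = {x ∈ K : v(x) ≤ 1} be the valuation ring of K. Then the Frobenius map φ : R/pR → R/pR, φ(x̄) = x̄^p, is surjective. -/
/-- Let `p` be a prime and `K` an algebraically closed field with a nonarchimedean
rank-one valuation `v : K → ℝ≥0` of residue characteristic `p` (i.e. `v p < 1`),
with valuation ring `R = {x : K | v x ≤ 1}`.  Then the Frobenius map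
`φ : R/pR → R/pR`, `φ(x̄) = x̄ ^ p`, is surjective. -/
theorem frobenius_surjective_of_algClosed
    (p : ℕ) (hp : p.Prime)
    (K : Type*) [Field K] [IsAlgClosed K]
    (v : Valuation K NNReal) (hres : v (p : K) < 1) :
    Function.Surjective
      (fun x : v.integer ⧸ Ideal.span ({(p : v.integer)} : Set v.integer) => x ^ p) := by
  intro xbar
  obtain ⟨x, rfl⟩ := Ideal.Quotient.mk_surjective xbar
  -- take a p-th root of x in K
  obtain ⟨y, hy⟩ := IsAlgClosed.exists_pow_nat_eq (x : K) hp.pos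
  have hyv : v y ≤ 1 := by
    by_contra h
    push_neg at h
    have : (1 : NNReal) < v y ^ p := one_lt_pow₀ h hp.ne_zero
    rw [← map_pow, hy] at this
    exact absurd x.2 (not_le.mpr this)
  refine ⟨Ideal.Quotient.mk _ ⟨y, hyv⟩, ?_⟩
  simp only [← map_pow]
  congr 1
  ext
  exact hy
end

section
/- Let K be a complete nonarchimedean normed field (a field with a multiplicative norm satisfying the ultrametric inequality, complete for the induced metric), and let F ⊆ K be a subfield which is algebraically closed as an abstract field. Then the topological closure of F in K is again an algebraically closed field. -/
open Polynomial Filter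

section Aux

variable {K : Type*} [NormedField K]

/-- norm of a multiset product in a normed field -/
private lemma norm_msprod (s : Multiset K) : ‖s.prod‖ = (s.map (fun x => ‖x‖)).prod := by
  induction s using Multiset.induction with
  | empty => simp
  | cons a s ih => simp [norm_mul, ih]

/-- a multiset of nonneg reals contains an element whose card-power is ≤ the product -/
private lemma exists_pow_card_le_prod (s : Multiset ℝ) (h0 : ∀ x ∈ s, 0 ≤ x) (hs : s ≠ 0) :
    ∃ x ∈ s, x ^ Multiset.card s ≤ s.prod := by
  induction s using Multiset.induction with
  | empty => exact absurd rfl hs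
  | cons a t ih =>
    rcases eq_or_ne t 0 with rfl | ht
    · exact ⟨a, by simp⟩
    · obtain ⟨y, hy, hyt⟩ := ih (fun x hx => h0 x (Multiset.mem_cons_of_mem hx)) ht
      have ha : 0 ≤ a := h0 a (Multiset.mem_cons_self a t)
      have hy0 : 0 ≤ y := h0 y (Multiset.mem_cons_of_mem hy)
      rcases le_total a y with hay | hya
      · refine ⟨a, Multiset.mem_cons_self a t, ?_⟩
        rw [Multiset.card_cons, Multiset.prod_cons, pow_succ']
        exact mul_le_mul_of_nonneg_left
          (le_trans (pow_le_pow_left₀ ha hay _) hyt) ha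
      · refine ⟨y, Multiset.mem_cons_of_mem hy, ?_⟩
        rw [Multiset.card_cons, Multiset.prod_cons, pow_succ']
        have : (0:ℝ) ≤ t.prod := Multiset.prod_nonneg
          (fun x hx => h0 x (Multiset.mem_cons_of_mem hx))
        exact mul_le_mul hya hyt (pow_nonneg hy0 _) ha

/-- root bound for monic polynomials via coefficient bounds -/
private lemma root_bound {n : ℕ} (hn : 0 < n) (Q : K[X]) (hm : Q.Monic)
    (hd : Q.natDegree = n) {B0 : ℝ} (hB01 : 1 ≤ B0) (hB : ∀ j < n, ‖Q.coeff j‖ ≤ B0)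
    {ρ : K} (hρ : Q.eval ρ = 0) : ‖ρ‖ ≤ n * B0 := by
  by_contra h
  push_neg at h
  have hn1 : (1:ℝ) ≤ n := by exact_mod_cast hn
  have h1 : (1:ℝ) < ‖ρ‖ := lt_of_le_of_lt (by nlinarith) h
  have hev : Q.eval ρ = ∑ j ∈ Finset.range (n+1), Q.coeff j * ρ ^ j := by
    rw [Polynomial.eval_eq_sum_range, hd]
  rw [Finset.sum_range_succ] at hev
  have hcn : Q.coeff n = 1 := by rw [← hd]; exact hm.coeff_natDegree
  rw [hcn, one_mul, hρ] at hev
  have hmain : ‖ρ‖ ^ n ≤ n * B0 * ‖ρ‖ ^ (n - 1) := by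
    have : ρ ^ n = -∑ j ∈ Finset.range n, Q.coeff j * ρ ^ j := by linear_combination -hev
    calc ‖ρ‖ ^ n = ‖ρ ^ n‖ := (norm_pow _ _).symm
      _ = ‖∑ j ∈ Finset.range n, Q.coeff j * ρ ^ j‖ := by rw [this, norm_neg]
      _ ≤ ∑ j ∈ Finset.range n, ‖Q.coeff j * ρ ^ j‖ := norm_sum_le _ _
      _ ≤ ∑ _j ∈ Finset.range n, B0 * ‖ρ‖ ^ (n-1) := by
          refine Finset.sum_le_sum fun j hj => ?_
          have hjn : j < n := Finset.mem_range.mp hj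
          rw [norm_mul, norm_pow]
          exact mul_le_mul (hB j hjn)
            (pow_le_pow_right₀ h1.le (by omega)) (pow_nonneg (norm_nonneg _) _)
            (by linarith)
      _ = n * B0 * ‖ρ‖ ^ (n-1) := by rw [Finset.sum_const, Finset.card_range]; ring
  have hlt : n * B0 * ‖ρ‖ ^ (n-1) < ‖ρ‖ ^ n := by
    have hpow : (0:ℝ) < ‖ρ‖ ^ (n-1) := pow_pos (by linarith) _
    calc n * B0 * ‖ρ‖ ^ (n-1) < ‖ρ‖ * ‖ρ‖ ^ (n-1) := by
          exact mul_lt_mul_of_pos_right h hpow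
      _ = ‖ρ‖ ^ n := by rw [← pow_succ']; congr 1; omega
  linarith

end Aux

section KeyRoot

variable {K : Type*} [NormedField K] [CompleteSpace K]

private lemma key_root (F : Subfield K) (hF : IsAlgClosed F) (P : K[X]) (hP : P.Monic)
    (hn : 0 < P.natDegree) (hc : ∀ j, P.coeff j ∈ closure (F : Set K)) :
    ∃ x ∈ closure (F : Set K), P.eval x = 0 := by
  classical
  set n := P.natDegree with hn'
  set B0 : ℝ := 1 + ∑ j ∈ Finset.range n, ‖P.coeff j‖ with hB0
  have hB01 : 1 ≤ B0 := by
    have : (0:ℝ) ≤ ∑ j ∈ Finset.range n, ‖P.coeff j‖ :=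
      Finset.sum_nonneg fun _ _ => norm_nonneg _
    simp only [hB0]; linarith
  have hPB0 : ∀ j < n, ‖P.coeff j‖ ≤ B0 - 1 := by
    intro j hj
    simpa [hB0] using Finset.single_le_sum (fun i _ => norm_nonneg (P.coeff i))
      (Finset.mem_range.mpr hj)
  set B : ℝ := n * B0 with hB
  have hB1 : (1:ℝ) ≤ B := by
    have hn1 : (1:ℝ) ≤ n := by exact_mod_cast hn
    nlinarith
  set Cc : ℝ := (n + 1) * B ^ n with hCc
  have hCpos : 0 < Cc := by positivity
  -- the key approximation step
  have step : ∀ ε : ℝ, 0 < ε → ε ≤ 1 → ∀ a : K, a ∈ F → ‖a‖ ≤ B →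
      ∃ a' : K, a' ∈ F ∧ ‖a'‖ ≤ B ∧ ‖P.eval a'‖ ≤ ε * Cc ∧
        ‖a' - a‖ ^ n ≤ ‖P.eval a‖ + ε * Cc := by
    intro ε hε hε1 a haF haB
    -- choose coefficient approximations in F
    have hf : ∀ j : ℕ, ∃ y : F, ‖P.coeff j - (y : K)‖ < ε := by
      intro j
      obtain ⟨b, hbF, hb⟩ := Metric.mem_closure_iff.mp (hc j) ε hε
      exact ⟨⟨b, hbF⟩, by rwa [dist_eq_norm] at hb⟩
    choose f hfspec using hf
    set q : F[X] := X ^ n + ∑ j ∈ Finset.range n, C (f j) * X ^ j with hq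
    have hsumdeg : (∑ j ∈ Finset.range n, C (f j) * X ^ j : F[X]).degree < (n : ℕ) := by
      refine lt_of_le_of_lt (Polynomial.degree_sum_le _ _) ?_
      rw [Finset.sup_lt_iff (by exact_mod_cast WithBot.bot_lt_coe n)]
      intro j hj
      exact lt_of_le_of_lt (Polynomial.degree_C_mul_X_pow_le j (f j))
        (by exact_mod_cast Finset.mem_range.mp hj)
    have hqm : q.Monic := Polynomial.monic_X_pow_add hsumdeg
    have hqdeg : q.natDegree = n := by
      apply Polynomial.natDegree_eq_of_degree_eq_some
      rw [hq, Polynomial.degree_add_eq_left_of_degree_lt (by simpa using hsumdeg),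
        Polynomial.degree_X_pow]
    have hqcoeff : ∀ j < n, q.coeff j = f j := by
      intro j hj
      rw [hq, Polynomial.coeff_add, Polynomial.coeff_X_pow, if_neg hj.ne,
        Polynomial.finset_sum_coeff]
      simp only [Polynomial.coeff_C_mul, Polynomial.coeff_X_pow, mul_ite, mul_one, mul_zero]
      simp [Finset.sum_ite_eq, Finset.mem_range.mpr hj]
    set ι : F →+* K := F.subtype with hι
    set Q : K[X] := q.map ι with hQ
    have hQm : Q.Monic := hqm.map ι
    have hQdeg : Q.natDegree = n := by rw [hQ, hqm.natDegree_map, hqdeg]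
    have hQcoeff : ∀ j, Q.coeff j = (q.coeff j : K) := fun j => Polynomial.coeff_map ι j
    have hQevF : ∀ y : F, Q.eval (y : K) = ((q.eval y : F) : K) := by
      intro y
      rw [hQ, Polynomial.eval_map]
      exact Polynomial.eval₂_hom ι y
    have hclose : ∀ j < n, ‖P.coeff j - Q.coeff j‖ ≤ ε := by
      intro j hj
      rw [hQcoeff, hqcoeff j hj]
      exact (hfspec j).le
    -- difference bound
    have hdiff : ∀ z : K, ‖z‖ ≤ B → ‖P.eval z - Q.eval z‖ ≤ ε * Cc := by
      intro z hz
      have hPz : P.eval z = ∑ j ∈ Finset.range (n + 1), P.coeff j * z ^ j := by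
        rw [Polynomial.eval_eq_sum_range]
      have hQz : Q.eval z = ∑ j ∈ Finset.range (n + 1), Q.coeff j * z ^ j := by
        rw [Polynomial.eval_eq_sum_range, hQdeg]
      rw [hPz, hQz, ← Finset.sum_sub_distrib]
      calc ‖∑ j ∈ Finset.range (n + 1), (P.coeff j * z ^ j - Q.coeff j * z ^ j)‖
          ≤ ∑ j ∈ Finset.range (n + 1), ‖P.coeff j * z ^ j - Q.coeff j * z ^ j‖ :=
            norm_sum_le _ _
        _ ≤ ∑ _j ∈ Finset.range (n + 1), ε * B ^ n := by
            refine Finset.sum_le_sum fun j hj => ?_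
            have hjn : j < n + 1 := Finset.mem_range.mp hj
            rw [← sub_mul, norm_mul, norm_pow]
            rcases lt_or_ge j n with hjlt | hjge
            · have h1 : ‖P.coeff j - Q.coeff j‖ ≤ ε := hclose j hjlt
              have h2 : ‖z‖ ^ j ≤ B ^ n :=
                le_trans (pow_le_pow_left₀ (norm_nonneg z) hz j)
                  (pow_le_pow_right₀ hB1 (by omega))
              exact mul_le_mul h1 h2 (pow_nonneg (norm_nonneg z) j) hε.le
            · have hjn' : j = n := by omega
              have hPn : P.coeff n = 1 := hP.coeff_natDegree
              have hQn : Q.coeff n = 1 := by rw [← hQdeg]; exact hQm.coeff_natDegree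
              have : P.coeff j - Q.coeff j = 0 := by rw [hjn', hPn, hQn, sub_self]
              rw [this, norm_zero, zero_mul]
              positivity
        _ = ε * Cc := by
            rw [Finset.sum_const, Finset.card_range, hCc, nsmul_eq_mul]
            push_cast; ring
    -- splitting of q over F
    have hsp : q.Splits := IsAlgClosed.splits q
    have hcard : Multiset.card q.roots = n := by
      rw [Polynomial.splits_iff_card_roots.mp hsp, hqdeg]
    have hfact : q = (Multiset.map (fun r => X - C r) q.roots).prod :=
      hsp.eq_prod_roots_of_monic hqm
    -- evaluate q at a (a ∈ F)
    set a₀ : F := ⟨a, haF⟩ with ha₀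
    have hqa : ‖Q.eval a‖ = (Multiset.map (fun r : F => ‖a - (r : K)‖) q.roots).prod := by
      have h1 : Q.eval a = ((q.eval a₀ : F) : K) := hQevF a₀
      have h2 : q.eval a₀ = (Multiset.map (fun r : F => a₀ - r) q.roots).prod := by
        conv_lhs => rw [hfact]
        rw [Polynomial.eval_multiset_prod, Multiset.map_map]
        simp
      have h3 : ((q.eval a₀ : F) : K) =
          (Multiset.map (fun r : F => a - (r : K)) q.roots).prod := by
        rw [h2]
        rw [show (((Multiset.map (fun r : F => a₀ - r) q.roots).prod : F) : K)
          = F.subtype ((Multiset.map (fun r : F => a₀ - r) q.roots).prod) from rfl]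
        rw [map_multiset_prod, Multiset.map_map]
        exact congrArg _ (Multiset.map_congr rfl fun r _ => by simp [ha₀])
      rw [h1, h3, norm_msprod, Multiset.map_map]
      rfl
    -- bound on ‖Q.eval a‖
    have hQa : ‖Q.eval a‖ ≤ ‖P.eval a‖ + ε * Cc := by
      calc ‖Q.eval a‖ ≤ ‖P.eval a‖ + ‖Q.eval a - P.eval a‖ := by
            have := norm_add_le (P.eval a) (Q.eval a - P.eval a)
            simpa using this
        _ ≤ ‖P.eval a‖ + ε * Cc := by
            have := hdiff a haB
            rw [norm_sub_rev] at this
            linarith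
    -- find a close root
    have hsne : (Multiset.map (fun r : F => ‖a - (r : K)‖) q.roots) ≠ 0 := by
      rw [Ne, Multiset.map_eq_zero]
      intro h0
      rw [h0] at hcard
      simp at hcard
      omega
    obtain ⟨x, hxmem, hxpow⟩ := exists_pow_card_le_prod
      (Multiset.map (fun r : F => ‖a - (r : K)‖) q.roots)
      (by intro x hx; obtain ⟨r, _, rfl⟩ := Multiset.mem_map.mp hx; exact norm_nonneg _)
      hsne
    obtain ⟨r, hrmem, rfl⟩ := Multiset.mem_map.mp hxmem
    rw [Multiset.card_map, hcard] at hxpow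
    have hQr : Q.eval (r : K) = 0 := by
      rw [hQevF r, (Polynomial.isRoot_of_mem_roots hrmem : q.eval r = 0)]
      simp
    have hQcb : ∀ j < n, ‖Q.coeff j‖ ≤ B0 := by
      intro j hj
      have h1 : ‖Q.coeff j‖ ≤ ‖P.coeff j‖ + ‖P.coeff j - Q.coeff j‖ := by
        simpa [sub_sub_cancel] using norm_sub_le (P.coeff j) (P.coeff j - Q.coeff j)
      have h2 := hPB0 j hj
      have h3 := hclose j hj
      linarith
    have hrB : ‖(r : K)‖ ≤ B := root_bound hn Q hQm hQdeg hB01 hQcb hQr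
    refine ⟨(r : K), r.2, hrB, ?_, ?_⟩
    · have := hdiff (r : K) hrB
      rwa [hQr, sub_zero] at this
    · rw [norm_sub_rev]
      exact le_trans (hxpow.trans (le_of_eq hqa.symm)) hQa
  -- construct the Cauchy sequence
  set c : ℕ → ℝ := fun m => (1/2 : ℝ) ^ m with hcdef
  have hcpos : ∀ m, 0 < c m := fun m => pow_pos (by norm_num) m
  set e : ℕ → ℝ := fun m => min 1 (c m ^ n / (2 * Cc)) with hedef
  have hepos : ∀ m, 0 < e m := fun m => lt_min one_pos (by positivity)
  have hele1 : ∀ m, e m ≤ 1 := fun m => min_le_left _ _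
  have heC : ∀ m, e m * Cc ≤ c m ^ n / 2 := by
    intro m
    have h1 : e m ≤ c m ^ n / (2 * Cc) := min_le_right _ _
    calc e m * Cc ≤ (c m ^ n / (2 * Cc)) * Cc := mul_le_mul_of_nonneg_right h1 hCpos.le
      _ = c m ^ n / 2 := by field_simp
  have hemono : ∀ m, e (m+1) ≤ e m := by
    intro m
    have hc' : c (m+1) ≤ c m :=
      pow_le_pow_of_le_one (by norm_num) (by norm_num) (Nat.le_succ m)
    have : c (m+1) ^ n ≤ c m ^ n := pow_le_pow_left₀ (hcpos _).le hc' n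
    exact min_le_min le_rfl (by gcongr)
  have step' : ∀ (m : ℕ) (x : K), x ∈ F → ‖x‖ ≤ B →
      ∃ y : K, y ∈ F ∧ ‖y‖ ≤ B ∧ ‖P.eval y‖ ≤ e m * Cc ∧
        ‖y - x‖ ^ n ≤ ‖P.eval x‖ + e m * Cc :=
    fun m x hx hxB => step (e m) (hepos m) (hele1 m) x hx hxB
  obtain ⟨a0, ha0F, ha0B, ha0P, -⟩ := step' 0 0 (zero_mem F) (by rw [norm_zero]; linarith)
  set next : ℕ → K → K := fun m x =>
    if h : x ∈ F ∧ ‖x‖ ≤ B then (step' (m+1) x h.1 h.2).choose else 0 with hnext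
  set u : ℕ → K := fun m => Nat.rec a0 next m with hu
  have huS : ∀ m, u (m+1) = next m (u m) := fun m => rfl
  have inv : ∀ m, u m ∈ F ∧ ‖u m‖ ≤ B ∧ ‖P.eval (u m)‖ ≤ e m * Cc := by
    intro m
    induction m with
    | zero => exact ⟨ha0F, ha0B, ha0P⟩
    | succ m ih =>
      rw [huS, hnext]
      simp only
      rw [dif_pos ⟨ih.1, ih.2.1⟩]
      obtain ⟨h1, h2, h3, -⟩ := (step' (m+1) (u m) ih.1 ih.2.1).choose_spec
      exact ⟨h1, h2, h3⟩
  have hdist : ∀ m, ‖u (m+1) - u m‖ ≤ c m := by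
    intro m
    obtain ⟨h1, h2, h3⟩ := inv m
    have heq : u (m+1) = (step' (m+1) (u m) h1 h2).choose := by
      rw [huS, hnext]
      simp only
      rw [dif_pos ⟨h1, h2⟩]
    have hspec := (step' (m+1) (u m) h1 h2).choose_spec
    have h4 := hspec.2.2.2
    have hee : e (m+1) * Cc ≤ e m * Cc := mul_le_mul_of_nonneg_right (hemono m) hCpos.le
    have h5 : ‖(step' (m+1) (u m) h1 h2).choose - u m‖ ^ n ≤ c m ^ n := by
      have hA := heC m
      linarith
    rw [heq]
    exact (pow_le_pow_iff_left₀ (norm_nonneg _) (hcpos m).le hn.ne').mp h5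
  have hcauchy : CauchySeq u := by
    apply cauchySeq_of_le_geometric (1/2 : ℝ) 1 (by norm_num)
    intro m
    rw [dist_eq_norm, norm_sub_rev, one_mul]
    exact hdist m
  obtain ⟨x, hx⟩ := cauchySeq_tendsto_of_complete hcauchy
  refine ⟨x, ?_, ?_⟩
  · exact mem_closure_of_tendsto hx (Eventually.of_forall fun m => (inv m).1)
  · have h1 : Tendsto (fun m => P.eval (u m)) atTop (nhds (P.eval x)) :=
      ((P.continuous).tendsto x).comp hx
    have hg : Tendsto (fun m => c m ^ n / 2) atTop (nhds 0) := by
      have hlim : Tendsto (fun m => (((1:ℝ)/2) ^ n) ^ m) atTop (nhds 0) :=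
        tendsto_pow_atTop_nhds_zero_of_lt_one (by positivity)
          (pow_lt_one₀ (by norm_num) (by norm_num) hn.ne')
      have : (fun m => c m ^ n / 2) = fun m => (((1:ℝ)/2) ^ n) ^ m / 2 := by
        funext m
        rw [hcdef]
        rw [← pow_mul, ← pow_mul, Nat.mul_comm]
      rw [this]
      simpa using hlim.div_const 2
    have h2 : Tendsto (fun m => P.eval (u m)) atTop (nhds 0) := by
      apply squeeze_zero_norm (fun m => le_trans (inv m).2.2 (heC m)) hg
    exact tendsto_nhds_unique h1 h2

end KeyRoot

/-- Let `K` be a complete nonarchimedean normed field (multiplicative ultrametric norm,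
complete for the induced metric) and let `F ⊆ K` be a subfield that is algebraically
closed as an abstract field.  Then the topological closure of `F` in `K` is again an
algebraically closed field. -/
theorem isAlgClosed_topologicalClosure
    (K : Type*) [NormedField K] [CompleteSpace K] [IsUltrametricDist K]
    (F : Subfield K) (hF : IsAlgClosed F) :
    IsAlgClosed F.topologicalClosure := by
  apply IsAlgClosed.of_exists_root
  intro p hpm hpi
  have hLset : (F.topologicalClosure : Set K) = closure (F : Set K) := rfl
  set P : K[X] := p.map F.topologicalClosure.subtype with hPdef
  have hPm : P.Monic := hpm.map _
  have hdeg : 0 < P.natDegree := by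
    rw [hPdef, hpm.natDegree_map]
    exact hpi.natDegree_pos
  have hcoef : ∀ j, P.coeff j ∈ closure (F : Set K) := by
    intro j
    rw [hPdef, Polynomial.coeff_map]
    exact (p.coeff j).2
  obtain ⟨x, hxcl, hx0⟩ := key_root F hF P hPm hdeg hcoef
  have hxL : x ∈ F.topologicalClosure := hxcl
  refine ⟨⟨x, hxL⟩, ?_⟩
  have heq : P.eval x = F.topologicalClosure.subtype (p.eval ⟨x, hxL⟩) := by
    rw [hPdef, Polynomial.eval_map]
    exact Polynomial.eval₂_hom F.topologicalClosure.subtype ⟨x, hxL⟩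
  rw [heq] at hx0
  exact Subtype.coe_injective hx0
end
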